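/- With R, U, η and W as above, W is monotone: if Y ≤ Ỹ pointwise (almost surely), then W(Y) ≤ W(Ỹ). Moreover, W(Ỹ) − W(Y) ≥ (η/(1+η))·(R(−Ỹ) − R(−Y)) ≥ 0. -/

import Mathlib

/-! The gain `R(-Y') - R(-Y)` in the first term of `W` is only partly given back by the
penalty term: pointwise, `(R(-Y') - Y')₊ ≤ (R(-Y) - Y)₊ + (R(-Y') - R(-Y))`, so by monotonicity
and cash additivity of `U` the penalty grows by at most that gain, damped by `1/(1+η)`. -/

theorem max_sub_zero_le_max_sub_zero_add {a a' y y' : ℝ} (ha : a ≤ a') (hy : y ≤ y') :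
    max (a' - y') 0 ≤ max (a - y) 0 + (a' - a) :=
  max_le (by linarith [le_max_left (a - y) 0]) (by linarith [le_max_right (a - y) 0])

theorem le_add_of_forall_le_add {Ω : Type*} {U : (Ω → ℝ) → ℝ}
    (hUti : ∀ (Y : Ω → ℝ) (l : ℝ), U (fun ω => Y ω + l) = U Y + l)
    (hUmono : ∀ Y Y' : Ω → ℝ, (∀ ω, Y ω ≤ Y' ω) → U Y ≤ U Y')
    {X X' : Ω → ℝ} {c : ℝ} (h : ∀ ω, X' ω ≤ X ω + c) : U X' ≤ U X + c :=
  (hUmono _ _ h).trans_eq (hUti X c)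

theorem mul_sub_le_sub_of_le_add {η a a' u u' : ℝ} (hη : 0 < η) (hu : u' ≤ u + (a' - a)) :
    η / (1 + η) * (a' - a) ≤ (a' - 1 / (1 + η) * u') - (a - 1 / (1 + η) * u) := by
  have hdamped : 1 / (1 + η) * (u' - u) ≤ 1 / (1 + η) * (a' - a) :=
    mul_le_mul_of_nonneg_left (by linarith) (by positivity)
  have hsplit : η / (1 + η) = 1 - 1 / (1 + η) := by
    field_simp
    ring
  rw [hsplit]
  linarith

theorem stmt_2_general {Ω : Type*}
    (R U : (Ω → ℝ) → ℝ) (η : ℝ) (hη : 0 < η)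
    (hRmono : ∀ Y Y' : Ω → ℝ, (∀ ω, Y ω ≤ Y' ω) → R Y' ≤ R Y)
    (hUti : ∀ (Y : Ω → ℝ) (l : ℝ), U (fun ω => Y ω + l) = U Y + l)
    (hUmono : ∀ Y Y' : Ω → ℝ, (∀ ω, Y ω ≤ Y' ω) → U Y ≤ U Y')
    (W : (Ω → ℝ) → ℝ)
    (hW : ∀ Y : Ω → ℝ,
      W Y = R (fun ω => -Y ω)
        - (1 / (1 + η)) * U (fun ω => max (R (fun ω' => -Y ω') - Y ω) 0)) :
    ∀ Y Y' : Ω → ℝ, (∀ ω, Y ω ≤ Y' ω) →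
      W Y ≤ W Y' ∧
      (η / (1 + η)) * (R (fun ω => -Y' ω) - R (fun ω => -Y ω)) ≤ W Y' - W Y ∧
      0 ≤ (η / (1 + η)) * (R (fun ω => -Y' ω) - R (fun ω => -Y ω)) := by
  intro Y Y' hYY'
  have hR : R (fun ω => -Y ω) ≤ R (fun ω => -Y' ω) :=
    hRmono _ _ fun ω => neg_le_neg (hYY' ω)
  have hU := le_add_of_forall_le_add hUti hUmono
    fun ω => max_sub_zero_le_max_sub_zero_add hR (hYY' ω)
  have hgain : (η / (1 + η)) * (R (fun ω => -Y' ω) - R (fun ω => -Y ω)) ≤ W Y' - W Y := by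
    rw [hW Y, hW Y']
    exact mul_sub_le_sub_of_le_add hη hU
  have hnonneg : 0 ≤ (η / (1 + η)) * (R (fun ω => -Y' ω) - R (fun ω => -Y ω)) :=
    mul_nonneg (by positivity) (sub_nonneg.2 hR)
  exact ⟨by linarith, hgain, hnonneg⟩

/-- Static version of Proposition 3.1(i): monotonicity of W with a quantitative bound. -/
theorem stmt_2 {Ω : Type*}
    (R U : (Ω → ℝ) → ℝ) (η : ℝ) (hη : 0 < η)
    (hRti : ∀ (Y : Ω → ℝ) (l : ℝ), R (fun ω => Y ω + l) = R Y - l)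
    (hRmono : ∀ Y Y' : Ω → ℝ, (∀ ω, Y ω ≤ Y' ω) → R Y' ≤ R Y)
    (hRph : ∀ (Y : Ω → ℝ) (c : ℝ), 0 ≤ c → R (fun ω => c * Y ω) = c * R Y)
    (hUti : ∀ (Y : Ω → ℝ) (l : ℝ), U (fun ω => Y ω + l) = U Y + l)
    (hUmono : ∀ Y Y' : Ω → ℝ, (∀ ω, Y ω ≤ Y' ω) → U Y ≤ U Y')
    (hUph : ∀ (Y : Ω → ℝ) (c : ℝ), 0 ≤ c → U (fun ω => c * Y ω) = c * U Y)
    (W : (Ω → ℝ) → ℝ)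
    (hW : ∀ Y : Ω → ℝ,
      W Y = R (fun ω => -Y ω)
        - (1 / (1 + η)) * U (fun ω => max (R (fun ω' => -Y ω') - Y ω) 0)) :
    ∀ Y Y' : Ω → ℝ, (∀ ω, Y ω ≤ Y' ω) →
      W Y ≤ W Y' ∧
      (η / (1 + η)) * (R (fun ω => -Y' ω) - R (fun ω => -Y ω)) ≤ W Y' - W Y ∧
      0 ≤ (η / (1 + η)) * (R (fun ω => -Y' ω) - R (fun ω => -Y ω)) :=
  stmt_2_general R U η hη hRmono hUti hUmono W hW
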